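/- arXiv:2107.06457 — 5 statements merged into one kernel-verified Lean document; each statement's English description precedes it below -/
import Mathlib

section
/- Let a, b : ℕ → ℂ be weight sequences and x, y : ℕ → ℂ be sequences of nonzero complex numbers (zeros) with x_n ≠ y_m for all n, m, and let N be a positive integer. Assume that for every k with 1 ≤ k ≤ N the series Σ_{n=1}^∞ a_n/x_n^k and Σ_{m=1}^∞ b_m/y_m^k converge absolutely, and that the double series Σ_{n,m} |a_n|·|b_m|/(|x_n|^N·|x_n − y_m|) and Σ_{n,m} |a_n|·|b_m|/(|y_m|^N·|x_n − y_m|) converge. Then Σ_{k=1}^{N} ζ_{x,a}(k)·ζ_{y,b}(N+1−k) = Σ_{n=1}^∞ a_n·ψ_{y,b}(x_n)/x_n^(N+1) + Σ_{m=1}^∞ b_m·ψ_{x,a}(y_m)/y_m^(N+1). -/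
/-!
Expanding each product `ζ_{x,a}(k) ζ_{y,b}(N+1-k)` as a double series and summing over `k`
first, the pair `(n, m)` contributes `a_n b_m ∑_k x_n^{-k} y_m^{-(N+1-k)}`, a geometric sum equal
to `a_n b_m / (x_n^N (y_m - x_n)) + a_n b_m / (y_m^N (x_n - y_m))`. The two double-series
hypotheses make each of these pieces absolutely summable, so they may be summed separately, over
`m` first for the one and over `n` first for the other; this produces the two `ψ`-terms.
-/

open Finset

theorem sum_Icc_inv_pow_mul_pow {K : Type*} [Field K] {x y : K} (hx : x ≠ 0) (hy : y ≠ 0)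
    (hxy : x ≠ y) (N : ℕ) :
    ∑ k ∈ Icc 1 N, (x ^ k * y ^ (N + 1 - k))⁻¹ = (x ^ N * (y - x))⁻¹ + (y ^ N * (x - y))⁻¹ := by
  have hshift : ∑ k ∈ Icc 1 N, (x ^ k * y ^ (N + 1 - k))⁻¹ =
      x⁻¹ * y⁻¹ * ∑ i ∈ range N, x⁻¹ ^ i * y⁻¹ ^ (N - 1 - i) := by
    rw [← Ico_add_one_right_eq_Icc, sum_Ico_eq_sum_range, mul_sum]
    refine sum_congr (by simp) fun i hi => ?_
    rw [mem_range] at hi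
    rw [show N + 1 - (1 + i) = N - 1 - i + 1 by omega, mul_inv, ← inv_pow, ← inv_pow,
      pow_add, pow_succ]
    ring
  have hgeom := geom_sum₂_mul x⁻¹ y⁻¹ N
  have hsub : x⁻¹ - y⁻¹ ≠ 0 := sub_ne_zero.mpr (inv_injective.ne hxy)
  rw [hshift, ← div_eq_of_eq_mul hsub hgeom.symm]
  have hyx : y - x ≠ 0 := sub_ne_zero.mpr hxy.symm
  have hxy' : x - y ≠ 0 := sub_ne_zero.mpr hxy
  simp only [inv_pow]
  field_simp
  ring

theorem tsum_mul_div_pow_mul_sub {K : Type*} [Field K] [TopologicalSpace K] [T2Space K]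
    [IsTopologicalSemiring K] {ξ : K} (hξ : ξ ≠ 0) (α : K) (b y : ℕ → K) (N : ℕ) :
    ∑' m, α * b m / (ξ ^ N * (y m - ξ)) = α * (∑' m, b m * ξ / (y m - ξ)) / ξ ^ (N + 1) := by
  rw [← tsum_mul_left, ← tsum_div_const]
  refine tsum_congr fun m => ?_
  rw [pow_succ]
  field_simp

theorem statement6_general (a b x y : ℕ → ℂ) (N : ℕ)
    (hx : ∀ n, x n ≠ 0) (hy : ∀ m, y m ≠ 0)
    (hxy : ∀ n m, x n ≠ y m)
    (ha : ∀ k, 1 ≤ k → k ≤ N → Summable (fun n => ‖a n / x n ^ k‖))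
    (hb : ∀ k, 1 ≤ k → k ≤ N → Summable (fun m => ‖b m / y m ^ k‖))
    (hdx : Summable (fun p : ℕ × ℕ =>
      ‖a p.1‖ * ‖b p.2‖ / (‖x p.1‖ ^ N * ‖x p.1 - y p.2‖)))
    (hdy : Summable (fun p : ℕ × ℕ =>
      ‖a p.1‖ * ‖b p.2‖ / (‖y p.2‖ ^ N * ‖x p.1 - y p.2‖))) :
    ∑ k ∈ Finset.Icc 1 N,
        (∑' n : ℕ, a n / x n ^ k) * (∑' m : ℕ, b m / y m ^ (N + 1 - k)) =
      (∑' n : ℕ, a n * (∑' m : ℕ, b m * x n / (y m - x n)) / x n ^ (N + 1)) +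
      (∑' m : ℕ, b m * (∑' n : ℕ, a n * y m / (x n - y m)) / y m ^ (N + 1)) := by
  set F : ℕ → ℕ × ℕ → ℂ := fun k p => a p.1 / x p.1 ^ k * (b p.2 / y p.2 ^ (N + 1 - k))
  set g : ℕ × ℕ → ℂ := fun p => a p.1 * b p.2 / (x p.1 ^ N * (y p.2 - x p.1))
  set h : ℕ × ℕ → ℂ := fun p => a p.1 * b p.2 / (y p.2 ^ N * (x p.1 - y p.2))
  have hF : ∀ k ∈ Icc 1 N, Summable (fun n => ‖a n / x n ^ k‖) ∧
      Summable (fun m => ‖b m / y m ^ (N + 1 - k)‖) := fun k hk => by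
    rw [mem_Icc] at hk
    exact ⟨ha k hk.1 hk.2, hb (N + 1 - k) (by omega) (by omega)⟩
  have hg : Summable g := Summable.of_norm <| hdx.congr fun p => by
    simp only [g, norm_div, norm_mul, norm_pow, norm_sub_rev (y p.2)]
  have hh : Summable h := Summable.of_norm <| hdy.congr fun p => by
    simp only [h, norm_div, norm_mul, norm_pow]
  have hpair : ∀ p, ∑ k ∈ Icc 1 N, F k p = g p + h p := fun p => by
    simp only [F, g, h, div_mul_div_comm, div_eq_mul_inv (a p.1 * b p.2), ← mul_sum, ← mul_add,
      sum_Icc_inv_pow_mul_pow (hx p.1) (hy p.2) (hxy p.1 p.2)]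
  calc ∑ k ∈ Icc 1 N, (∑' n, a n / x n ^ k) * (∑' m, b m / y m ^ (N + 1 - k))
      = ∑ k ∈ Icc 1 N, ∑' p, F k p :=
        sum_congr rfl fun k hk => tsum_mul_tsum_of_summable_norm (hF k hk).1 (hF k hk).2
    _ = ∑' p, (g p + h p) := by
        rw [← Summable.tsum_finsetSum fun k hk =>
          summable_mul_of_summable_norm (hF k hk).1 (hF k hk).2]
        exact tsum_congr hpair
    _ = (∑' n, ∑' m, g (n, m)) + ∑' m, ∑' n, h (n, m) := by
        rw [hg.tsum_add hh, hg.tsum_prod, hh.tsum_prod,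
          Summable.tsum_comm (f := fun n m => h (n, m)) hh]
    _ = _ := by
        refine congrArg₂ (· + ·) (tsum_congr fun n => ?_) (tsum_congr fun m => ?_)
        · exact tsum_mul_div_pow_mul_sub (hx n) (a n) b y N
        · simp only [h, mul_comm (a _) (b m)]
          exact tsum_mul_div_pow_mul_sub (hy m) (b m) a x N

/-- Two-fold convolution of Dirichlet series: the convolution of two Dirichlet
series equals the sum of the same Dirichlet series with modified weights. -/
theorem statement6 (a b x y : ℕ → ℂ) (N : ℕ) (hN : 1 ≤ N)
    (hx : ∀ n, x n ≠ 0) (hy : ∀ m, y m ≠ 0)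
    (hxy : ∀ n m, x n ≠ y m)
    (ha : ∀ k, 1 ≤ k → k ≤ N → Summable (fun n => ‖a n / x n ^ k‖))
    (hb : ∀ k, 1 ≤ k → k ≤ N → Summable (fun m => ‖b m / y m ^ k‖))
    (hdx : Summable (fun p : ℕ × ℕ =>
      ‖a p.1‖ * ‖b p.2‖ / (‖x p.1‖ ^ N * ‖x p.1 - y p.2‖)))
    (hdy : Summable (fun p : ℕ × ℕ =>
      ‖a p.1‖ * ‖b p.2‖ / (‖y p.2‖ ^ N * ‖x p.1 - y p.2‖))) :
    ∑ k ∈ Finset.Icc 1 N,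
        (∑' n : ℕ, a n / x n ^ k) * (∑' m : ℕ, b m / y m ^ (N + 1 - k)) =
      (∑' n : ℕ, a n * (∑' m : ℕ, b m * x n / (y m - x n)) / x n ^ (N + 1)) +
      (∑' m : ℕ, b m * (∑' n : ℕ, a n * y m / (x n - y m)) / y m ^ (N + 1)) :=
  statement6_general a b x y N hx hy hxy ha hb hdx hdy
end

section
/- Let r ≥ 2 and for each i ∈ {1,…,r} let a⁽ⁱ⁾ : ℕ → ℂ be a weight sequence and x⁽ⁱ⁾ : ℕ → ℂ a sequence of nonzero complex numbers (zeros), with x⁽ⁱ⁾_p ≠ x⁽ʲ⁾_q whenever i ≠ j. Let N be an integer with N+1 ≥ r and assume all the series below converge absolutely, including the r-fold series of absolute values of the right-hand side summands. Then the r-fold convolution Σ over r-tuples (k₁,…,k_r) of positive integers with k₁+⋯+k_r = N+1 of ∏_{i=1}^r ζ_{x⁽ⁱ⁾,a⁽ⁱ⁾}(k_i) equals Σ_{i=1}^r Σ_{p=1}^∞ a⁽ⁱ⁾_p · ( ∏_{j≠i} ψ_{x⁽ʲ⁾,a⁽ʲ⁾}(x⁽ⁱ⁾_p) ) / (x⁽ⁱ⁾_p)^(N+1).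 -/
/-!
Write `u = x⁻¹`. By absolute convergence each product of Dirichlet series is a sum over all index
tuples `m`, and for fixed `m` the sum over compositions `k` of `N + 1` is `∏ (a / x)` times the
complete homogeneous polynomial `h_{N+1-r}(u)`. This equals the divided difference of `X ^ N` at the
nodes `u`, i.e. `Σ_i u_i ^ N / ∏_{j ≠ i} (u_i - u_j)`, which is the right-hand side term by term.
Summing over the coordinates `m_j`, `j ≠ i`, then reassembles the factors `ψ_{x⁽ʲ⁾,a⁽ʲ⁾}(x⁽ⁱ⁾_p)`.
-/

open Finset

section DividedDifference

variable {ι K : Type*} [DecidableEq ι] [Field K]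

def completeHomogeneous (s : Finset ι) (u : ι → K) (m : ℕ) : K :=
  ∑ k ∈ s.piAntidiag m, ∏ i ∈ s, u i ^ k i

def dividedDifference (s : Finset ι) (u : ι → K) (f : K → K) : K :=
  ∑ i ∈ s, f (u i) / ∏ j ∈ s.erase i, (u i - u j)

variable {s : Finset ι} {u : ι → K} {a : ι}

theorem dividedDifference_pow_card_sub_one (hu : Set.InjOn u s) (hs : s.Nonempty) :
    dividedDifference s u (· ^ (#s - 1)) = 1 := by
  have h := Lagrange.coeff_eq_sum hu (P := Polynomial.X ^ (#s - 1)) ?_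
  · simpa [dividedDifference] using h.symm
  · rw [Polynomial.degree_X_pow]
    exact_mod_cast Nat.sub_lt hs.card_pos one_pos

theorem dividedDifference_cons_pow_succ (ha : a ∉ s) (hua : ∀ i ∈ s, u i ≠ u a) (e : ℕ) :
    dividedDifference (cons a s ha) u (· ^ (e + 1)) =
      dividedDifference s u (· ^ e) + u a * dividedDifference (cons a s ha) u (· ^ e) := by
  simp only [dividedDifference, sum_cons, erase_cons, mul_add, mul_sum]
  rw [add_left_comm, pow_succ', mul_div_assoc]
  congr 1
  rw [← sum_add_distrib]
  refine sum_congr rfl fun i hi => ?_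
  have hne : u i - u a ≠ 0 := sub_ne_zero.2 (hua i hi)
  rw [erase_cons_of_ne ha (ne_of_mem_of_not_mem hi ha).symm, prod_cons]
  field_simp
  ring

@[simp]
theorem completeHomogeneous_zero : completeHomogeneous s u 0 = 1 := by
  simp [completeHomogeneous]

theorem completeHomogeneous_cons (ha : a ∉ s) (n : ℕ) :
    completeHomogeneous (cons a s ha) u n =
      ∑ p ∈ antidiagonal n, u a ^ p.1 * completeHomogeneous s u p.2 := by
  rw [completeHomogeneous, piAntidiag_cons, sum_disjiUnion]
  refine sum_congr rfl fun p _ => ?_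
  rw [sum_map, completeHomogeneous, mul_sum]
  refine sum_congr rfl fun k hk => ?_
  have hka : k a = 0 := by
    by_contra h
    exact ha ((mem_piAntidiag.1 hk).2 a h)
  rw [prod_cons]
  simp only [addRightEmbedding_apply, Pi.add_apply, hka, zero_add]
  congr 1
  refine prod_congr rfl fun j hj => ?_
  rw [if_neg (ne_of_mem_of_not_mem hj ha), add_zero]

theorem completeHomogeneous_cons_succ (ha : a ∉ s) (n : ℕ) :
    completeHomogeneous (cons a s ha) u (n + 1) =
      completeHomogeneous s u (n + 1) + u a * completeHomogeneous (cons a s ha) u n := by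
  rw [completeHomogeneous_cons, completeHomogeneous_cons, Nat.sum_antidiagonal_succ, mul_sum]
  simp only [pow_zero, one_mul, pow_succ]
  congr 1
  refine sum_congr rfl fun p _ => by ring

/-- Both sides satisfy `F (insert a s) (m + 1) = F s (m + 1) + u a * F (insert a s) m`. -/
theorem completeHomogeneous_succ_eq_dividedDifference (hu : Set.InjOn u s) (m : ℕ) :
    completeHomogeneous s u (m + 1) = dividedDifference s u (· ^ (m + #s)) := by
  induction s using Finset.cons_induction generalizing m with
  | empty => simp [completeHomogeneous, dividedDifference]
  | cons a s ha ih =>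
    have hu' : Set.InjOn u s := hu.mono (by simp)
    have hua : ∀ i ∈ s, u i ≠ u a := fun i hi h =>
      ne_of_mem_of_not_mem hi ha (hu (by simp [hi]) (by simp) h)
    induction m with
    | zero =>
      have hone := dividedDifference_pow_card_sub_one hu (cons_nonempty ha)
      rw [card_cons, Nat.add_sub_cancel] at hone
      rw [completeHomogeneous_cons_succ, ih hu', completeHomogeneous_zero, card_cons, zero_add,
        zero_add, dividedDifference_cons_pow_succ ha hua, hone]
    | succ m ihm =>
      rw [card_cons] at ihm ⊢
      rw [completeHomogeneous_cons_succ, ih hu', ihm,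
        show m + 1 + (#s + 1) = m + 1 + #s + 1 by omega, dividedDifference_cons_pow_succ ha hua,
        show m + (#s + 1) = m + 1 + #s by omega]

theorem completeHomogeneous_eq_dividedDifference (hu : Set.InjOn u s) (hs : s.Nonempty) (m : ℕ) :
    completeHomogeneous s u m = dividedDifference s u (· ^ (m + #s - 1)) := by
  cases m with
  | zero => rw [completeHomogeneous_zero, zero_add, dividedDifference_pow_card_sub_one hu hs]
  | succ m =>
    rw [completeHomogeneous_succ_eq_dividedDifference hu, show m + 1 + #s - 1 = m + #s by omega]

end DividedDifference

theorem sum_compositions_eq_sum_piAntidiag {ι M : Type*} [Fintype ι] [DecidableEq ι]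
    [AddCommMonoid M] {N : ℕ} (hι : 2 ≤ Fintype.card ι) (hN : Fintype.card ι ≤ N + 1)
    (f : (ι → ℕ) → M) :
    ∑ k ∈ (Fintype.piFinset fun _ : ι => Icc 1 N).filter (fun k => ∑ i, k i = N + 1), f k =
      ∑ k ∈ univ.piAntidiag (N + 1 - Fintype.card ι), f (k + 1) := by
  have hsum : ∀ k : ι → ℕ, ∑ i, (k + 1) i = ∑ i, k i + Fintype.card ι := by
    simp [sum_add_distrib]
  have hpos : ∀ k : ι → ℕ, (∀ i, 1 ≤ k i) → k - 1 + 1 = k := fun k hk =>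
    funext fun i => Nat.sub_add_cancel (hk i)
  refine sum_nbij' (· - 1) (· + 1) (fun k hk => ?_) (fun k hk => ?_) (fun k hk => ?_)
    (fun k _ => by ext; simp) (fun k hk => ?_)
  all_goals simp only [mem_filter, Fintype.mem_piFinset, mem_Icc, mem_piAntidiag, mem_univ,
    implies_true, and_true] at hk ⊢
  · have := hsum (k - 1)
    rw [hpos k fun i => (hk.1 i).1] at this
    change ∑ i, (k - 1) i = _
    omega
  · refine ⟨fun i => ?_, by rw [hsum, hk]; omega⟩
    have : k i ≤ univ.sum k := single_le_sum (fun j _ => Nat.zero_le (k j)) (mem_univ i)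
    simp only [Pi.add_apply, Pi.one_apply]
    omega
  · exact hpos k fun i => (hk.1 i).1
  · rw [hpos k fun i => (hk.1 i).1]

theorem sum_compositions_prod_div_pow {ι K : Type*} [Fintype ι] [DecidableEq ι] [Field K]
    {N : ℕ} (hι : 2 ≤ Fintype.card ι) (hN : Fintype.card ι ≤ N + 1) (A y : ι → K)
    (hy : ∀ i, y i ≠ 0) (hinj : Function.Injective y) :
    ∑ k ∈ (Fintype.piFinset fun _ : ι => Icc 1 N).filter (fun k => ∑ i, k i = N + 1),
        ∏ i, A i / y i ^ k i =
      ∑ i, A i * (∏ j ∈ univ.erase i, A j * y i / (y j - y i)) / y i ^ (N + 1) := by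
  have hsplit : ∀ k : ι → ℕ,
      ∏ i, A i / y i ^ (k + 1) i = (∏ i, A i / y i) * ∏ i, (y i)⁻¹ ^ k i := fun k => by
    rw [← prod_mul_distrib]
    refine prod_congr rfl fun i _ => ?_
    simp only [Pi.add_apply, Pi.one_apply, pow_succ, inv_pow]
    ring
  have hne : (univ : Finset ι).Nonempty := card_pos.1 (by rw [card_univ]; omega)
  rw [sum_compositions_eq_sum_piAntidiag hι hN, sum_congr rfl fun k _ => hsplit k, ← mul_sum]
  rw [← completeHomogeneous, completeHomogeneous_eq_dividedDifference
    (u := fun i => (y i)⁻¹) (inv_injective.comp hinj).injOn hne, dividedDifference, mul_sum,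
    card_univ, show N + 1 - Fintype.card ι + Fintype.card ι - 1 = N by omega]
  refine sum_congr rfl fun i _ => ?_
  have hfactor : ∀ j ∈ univ.erase i,
      A j * y i / (y j - y i) = A j / y j / ((y i)⁻¹ - (y j)⁻¹) := fun j hj => by
    have hji : y j - y i ≠ 0 := sub_ne_zero.2 (hinj.ne (ne_of_mem_erase hj))
    field_simp [hy i, hy j]
  rw [prod_congr rfl hfactor, prod_div_distrib (f := fun j => A j / y j),
    ← mul_prod_erase univ (fun l => A l / y l) (mem_univ i), pow_succ]
  ring

section PiProd

variable {α R : Type*} [NormedCommRing R]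

theorem summable_norm_prod_apply {ι : Type*} [hι : Fintype ι] {f : ι → α → R}
    (hf : ∀ i, Summable fun a => ‖f i a‖) : Summable fun m : ι → α => ‖∏ i, f i (m i)‖ := by
  suffices H : ∀ f : ι → α → R, (∀ i, Summable fun a => ‖f i a‖) →
      Summable fun m : ι → α => ‖∏ i, f i (m i)‖ from H f hf
  clear f hf
  refine Fintype.induction_empty_option ?_ ?_ ?_ ι (h_fintype := hι)
  · intro ι κ _ e h f hf
    let := Fintype.ofEquiv κ e.symm
    rw [← (e.arrowCongr (Equiv.refl α)).summable_iff]
    refine (h _ fun i => hf (e i)).congr fun m => ?_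
    rw [Function.comp_apply, ← e.prod_comp]
    simp
  · intro f _
    exact .of_finite
  · intro ι _ h f hf
    rw [← (Equiv.piOptionEquivProd (β := fun _ => α)).symm.summable_iff]
    refine ((hf none).mul_norm (h _ fun i => hf (some i))).congr fun m => ?_
    simp [Fintype.prod_option]

theorem tsum_prod_apply [CompleteSpace R] {ι : Type*} [hι : Fintype ι] {f : ι → α → R}
    (hf : ∀ i, Summable fun a => ‖f i a‖) : ∑' m : ι → α, ∏ i, f i (m i) = ∏ i, ∑' a, f i a := by
  suffices H : ∀ f : ι → α → R, (∀ i, Summable fun a => ‖f i a‖) →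
      ∑' m : ι → α, ∏ i, f i (m i) = ∏ i, ∑' a, f i a from H f hf
  clear f hf
  refine Fintype.induction_empty_option ?_ ?_ ?_ ι (h_fintype := hι)
  · intro ι κ _ e h f hf
    let := Fintype.ofEquiv κ e.symm
    rw [← (e.arrowCongr (Equiv.refl α)).tsum_eq, ← e.prod_comp, ← h _ fun i => hf (e i)]
    refine tsum_congr fun m => ?_
    rw [← e.prod_comp]
    simp
  · intro f _
    simp
  · intro ι _ h f hf
    rw [← (Equiv.piOptionEquivProd (β := fun _ => α)).symm.tsum_eq, Fintype.prod_option,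
      ← h _ fun i => hf (some i),
      tsum_mul_tsum_of_summable_norm (hf none) (summable_norm_prod_apply fun i => hf (some i))]
    refine tsum_congr fun z => ?_
    simp [Fintype.prod_option]

theorem tsum_mul_prod_erase [CompleteSpace R] {ι : Type*} [Fintype ι] [DecidableEq ι] (i : ι)
    {F : α → R} {G : α → ι → α → R}
    (hsum : Summable fun m : ι → α => F (m i) * ∏ j ∈ univ.erase i, G (m i) j (m j))
    (hG : ∀ p, ∀ j ≠ i, Summable fun q => ‖G p j q‖) :
    ∑' m : ι → α, F (m i) * ∏ j ∈ univ.erase i, G (m i) j (m j) =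
      ∑' p, F p * ∏ j ∈ univ.erase i, ∑' q, G p j q := by
  obtain ⟨e, hei, hej⟩ : ∃ e : α × ({j // j ≠ i} → α) ≃ (ι → α),
      (∀ z, e z i = z.1) ∧ ∀ z (j : {j // j ≠ i}), e z j = z.2 j :=
    ⟨(Equiv.funSplitAt i α).symm, fun z => by simp, fun z j => by simp [j.2]⟩
  have hfiber : ∀ p (g : {j // j ≠ i} → α),
      F (e (p, g) i) * ∏ j ∈ univ.erase i, G (e (p, g) i) j (e (p, g) j) =
        F p * ∏ j : {j // j ≠ i}, G p j (g j) := fun p g => by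
    rw [hei, prod_subtype (p := (· ≠ i)) (univ.erase i) (fun j => by simp)]
    exact congrArg _ (Fintype.prod_congr _ _ fun j => by rw [hej])
  have hfiber_summable :
      ∀ p, Summable fun g : {j // j ≠ i} → α => ∏ j : {j // j ≠ i}, G p j (g j) := fun p =>
    (summable_norm_prod_apply (f := fun j : {j // j ≠ i} => G p j) fun j => hG p j j.2).of_norm
  rw [← e.summable_iff, Function.comp_def] at hsum
  rw [← e.tsum_eq, hsum.tsum_prod' fun p =>
    ((hfiber_summable p).mul_left (F p)).congr fun g => (hfiber p g).symm]
  refine tsum_congr fun p => ?_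
  rw [tsum_congr (hfiber p), (hfiber_summable p).tsum_mul_left,
    tsum_prod_apply (f := fun j : {j // j ≠ i} => G p j) fun j => hG p j j.2,
    prod_subtype (p := (· ≠ i)) (univ.erase i) (fun j => by simp)]

end PiProd

/-- Main theorem: the r-fold convolution of Dirichlet series equals the sum of the
same r Dirichlet series with modified weights. -/
theorem statement8 (r : ℕ) (hr : 2 ≤ r) (a x : Fin r → ℕ → ℂ) (N : ℕ) (hN : r ≤ N + 1)
    (hx : ∀ i p, x i p ≠ 0)
    (hxx : ∀ i j p q, i ≠ j → x i p ≠ x j q)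
    (ha : ∀ i k, 1 ≤ k → k ≤ N → Summable (fun p => ‖a i p / x i p ^ k‖))
    (hψ : ∀ i j p, i ≠ j → Summable (fun q => ‖a j q * x i p / (x j q - x i p)‖))
    (hR : ∀ i : Fin r, Summable (fun m : Fin r → ℕ =>
      ‖a i (m i) *
          (∏ j ∈ Finset.univ.erase i, (a j (m j) * x i (m i) / (x j (m j) - x i (m i)))) /
        x i (m i) ^ (N + 1)‖)) :
    ∑ k ∈ (Fintype.piFinset fun _ : Fin r => Finset.Icc 1 N).filter
        (fun k : Fin r → ℕ => ∑ i, k i = N + 1),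
      ∏ i : Fin r, (∑' p : ℕ, a i p / x i p ^ k i) =
    ∑ i : Fin r, ∑' p : ℕ,
      a i p * (∏ j ∈ Finset.univ.erase i, ∑' q : ℕ, a j q * x i p / (x j q - x i p)) /
        x i p ^ (N + 1) := by
  have hζ : ∀ k ∈ (Fintype.piFinset fun _ : Fin r => Icc 1 N).filter (fun k => ∑ i, k i = N + 1),
      ∀ i, Summable fun p => ‖a i p / x i p ^ k i‖ := fun k hk i => by
    simp only [mem_filter, Fintype.mem_piFinset, mem_Icc] at hk
    exact ha i (k i) (hk.1 i).1 (hk.1 i).2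
  have hfinite := fun m : Fin r → ℕ => sum_compositions_prod_div_pow (N := N) (by simpa)
    (by simpa) (fun i => a i (m i)) (fun i => x i (m i)) (fun i => hx i (m i))
    fun i j h => by_contra fun hij => hxx i j _ _ hij h
  rw [sum_congr rfl fun k hk => (tsum_prod_apply (hζ k hk)).symm,
    ← Summable.tsum_finsetSum fun k hk => (summable_norm_prod_apply (hζ k hk)).of_norm,
    tsum_congr hfinite, Summable.tsum_finsetSum fun i _ => (hR i).of_norm]
  refine sum_congr rfl fun i _ => ?_
  simp only [mul_div_right_comm (a i _)]
  exact tsum_mul_prod_erase i (F := fun p => a i p / x i p ^ (N + 1))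
    (G := fun p j q => a j q * x i p / (x j q - x i p))
    ((hR i).of_norm.congr fun m => mul_div_right_comm _ _ _) fun p j hj => hψ i j p hj.symm
end

section
/- Let a, b : ℕ → ℂ be weight sequences and x, y : ℕ → ℂ sequences of nonzero complex numbers with x_p ≠ y_q for all p, q, and let z ∈ ℂ satisfy z ≠ x_p and z ≠ y_q for all p, q. Assume the double series Σ_{p,q} |a_p·b_q| · |z/(y_q − z)| · |y_q/(x_p − y_q)|, Σ_{p,q} |a_p·b_q| · |z/(x_p − z)| · |x_p/(y_q − x_p)| and Σ_{p,q} |a_p·b_q| · |z/(x_p − z)| · |z/(y_q − z)| converge. Then Σ_{p,q} a_p·b_q·(z/(y_q − z))·(y_q/(x_p − y_q)) + Σ_{p,q} a_p·b_q·(z/(x_p − z))·(x_p/(y_q − x_p)) = ( Σ_p a_p·z/(x_p − z) ) · ( Σ_q b_q·z/(y_q − z) ). -/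
/-!
Both double series converge absolutely, so they may be added termwise. For each pair `(p, q)`
the partial-fraction identity
`Y/(X - Y) · z/(Y - z) + X/(Y - X) · z/(X - z) = z/(X - z) · z/(Y - z)`
turns the summand into `a_p z/(x_p - z) · b_q z/(y_q - z)`, and an absolutely convergent double
series of products factors into the product of the two single series.
-/

theorem div_sub_mul_div_sub_add_div_sub_mul_div_sub {K : Type*} [Field K] {X Y z : K}
    (hXY : X ≠ Y) (hzX : z ≠ X) (hzY : z ≠ Y) :
    z / (Y - z) * (Y / (X - Y)) + z / (X - z) * (X / (Y - X)) =
      z / (X - z) * (z / (Y - z)) := by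
  have hXY' : X - Y ≠ 0 := sub_ne_zero.mpr hXY
  have hYX : Y - X ≠ 0 := sub_ne_zero.mpr hXY.symm
  have hXz : X - z ≠ 0 := sub_ne_zero.mpr hzX.symm
  have hYz : Y - z ≠ 0 := sub_ne_zero.mpr hzY.symm
  field_simp
  ring

/-- Unlike `Summable.tsum_mul_tsum`, the factors need not be summable on their own: over a
division ring, `tsum_mul_left` holds unconditionally. -/
theorem tsum_prod_mul_eq_mul_tsum {𝕜 α β : Type*} [NormedDivisionRing 𝕜] [CompleteSpace 𝕜]
    {f : α → 𝕜} {g : β → 𝕜} (hfg : Summable fun t : α × β ↦ f t.1 * g t.2) :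
    ∑' t : α × β, f t.1 * g t.2 = (∑' a, f a) * ∑' b, g b := by
  rw [hfg.tsum_prod' hfg.prod_factor]
  simp only [tsum_mul_left, tsum_mul_right]

theorem statement9_general (a b x y : ℕ → ℂ) (z : ℂ)
    (hxy : ∀ p q, x p ≠ y q)
    (hzx : ∀ p, z ≠ x p) (hzy : ∀ q, z ≠ y q)
    (h1 : Summable (fun t : ℕ × ℕ =>
      ‖a t.1 * b t.2‖ * ‖z / (y t.2 - z)‖ * ‖y t.2 / (x t.1 - y t.2)‖))
    (h2 : Summable (fun t : ℕ × ℕ =>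
      ‖a t.1 * b t.2‖ * ‖z / (x t.1 - z)‖ * ‖x t.1 / (y t.2 - x t.1)‖))
    (h3 : Summable (fun t : ℕ × ℕ =>
      ‖a t.1 * b t.2‖ * ‖z / (x t.1 - z)‖ * ‖z / (y t.2 - z)‖)) :
    (∑' t : ℕ × ℕ, a t.1 * b t.2 * (z / (y t.2 - z)) * (y t.2 / (x t.1 - y t.2))) +
      (∑' t : ℕ × ℕ, a t.1 * b t.2 * (z / (x t.1 - z)) * (x t.1 / (y t.2 - x t.1))) =
      (∑' p : ℕ, a p * z / (x p - z)) * (∑' q : ℕ, b q * z / (y q - z)) := by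
  have hs1 : Summable fun t : ℕ × ℕ ↦
      a t.1 * b t.2 * (z / (y t.2 - z)) * (y t.2 / (x t.1 - y t.2)) :=
    .of_norm (by simpa only [norm_mul] using h1)
  have hs2 : Summable fun t : ℕ × ℕ ↦
      a t.1 * b t.2 * (z / (x t.1 - z)) * (x t.1 / (y t.2 - x t.1)) :=
    .of_norm (by simpa only [norm_mul] using h2)
  have hs3 : Summable fun t : ℕ × ℕ ↦ a t.1 * z / (x t.1 - z) * (b t.2 * z / (y t.2 - z)) := by
    refine .of_norm (h3.congr fun t ↦ ?_)
    simp only [norm_mul, norm_div]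
    ring
  have hterm : ∀ t : ℕ × ℕ,
      a t.1 * b t.2 * (z / (y t.2 - z)) * (y t.2 / (x t.1 - y t.2)) +
        a t.1 * b t.2 * (z / (x t.1 - z)) * (x t.1 / (y t.2 - x t.1)) =
      a t.1 * z / (x t.1 - z) * (b t.2 * z / (y t.2 - z)) := fun t ↦ by
    linear_combination a t.1 * b t.2 *
      div_sub_mul_div_sub_add_div_sub_mul_div_sub (hxy t.1 t.2) (hzx t.1) (hzy t.2)
  rw [← hs1.tsum_add hs2, tsum_congr hterm]
  exact tsum_prod_mul_eq_mul_tsum (f := fun p ↦ a p * z / (x p - z))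
    (g := fun q ↦ b q * z / (y q - z)) hs3

/-- The sum-to-product composition rule for zeta generating functions:
ψ_{x,a·ψ_y}(z) + ψ_{y,b·ψ_x}(z) = ψ_{x,a}(z)·ψ_{y,b}(z). -/
theorem statement9 (a b x y : ℕ → ℂ) (z : ℂ)
    (hx : ∀ p, x p ≠ 0) (hy : ∀ q, y q ≠ 0)
    (hxy : ∀ p q, x p ≠ y q)
    (hzx : ∀ p, z ≠ x p) (hzy : ∀ q, z ≠ y q)
    (h1 : Summable (fun t : ℕ × ℕ =>
      ‖a t.1 * b t.2‖ * ‖z / (y t.2 - z)‖ * ‖y t.2 / (x t.1 - y t.2)‖))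
    (h2 : Summable (fun t : ℕ × ℕ =>
      ‖a t.1 * b t.2‖ * ‖z / (x t.1 - z)‖ * ‖x t.1 / (y t.2 - x t.1)‖))
    (h3 : Summable (fun t : ℕ × ℕ =>
      ‖a t.1 * b t.2‖ * ‖z / (x t.1 - z)‖ * ‖z / (y t.2 - z)‖)) :
    (∑' t : ℕ × ℕ, a t.1 * b t.2 * (z / (y t.2 - z)) * (y t.2 / (x t.1 - y t.2))) +
      (∑' t : ℕ × ℕ, a t.1 * b t.2 * (z / (x t.1 - z)) * (x t.1 / (y t.2 - x t.1))) =
      (∑' p : ℕ, a p * z / (x p - z)) * (∑' q : ℕ, b q * z / (y q - z)) :=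
  statement9_general a b x y z hxy hzx hzy h1 h2 h3
end

section
/- Let a, b : ℕ×ℕ → ℂ be doubly indexed weight sequences and x, y : ℕ×ℕ → ℂ doubly indexed sequences of nonzero complex numbers with x_{m,n} ≠ y_{p,q} for all indices, and let N be a positive integer. Assume that for every k with 1 ≤ k ≤ N the double series Σ_{m,n} a_{m,n}/x_{m,n}^k and Σ_{m,n} b_{m,n}/y_{m,n}^k converge absolutely, and that the quadruple series Σ |a_{m,n}|·|b_{p,q}|/(|x_{m,n}|^N·|x_{m,n} − y_{p,q}|) and Σ |a_{m,n}|·|b_{p,q}|/(|y_{p,q}|^N·|x_{m,n} − y_{p,q}|) converge. Then Σ_{k=1}^{N} ζ_{x,a}(k)·ζ_{y,b}(N+1−k) = Σ_{m,n} [ a_{m,n}·ψ_{y,b}(x_{m,n})/x_{m,n}^(N+1) + b_{m,n}·ψ_{x,a}(y_{m,n})/y_{m,n}^(N+1) ]. -/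
/-!
Expanding each product of series as a double series, the left side becomes the sum over all
pairs `(p, q)` of `a_p b_q ∑_{k=1}^N 1 / (x_p^k y_q^(N+1-k))`, and the finite sum has the partial
fraction decomposition `1 / (x^N (y - x)) + 1 / (y^N (x - y))`. The two resulting quadruple series
converge absolutely by hypothesis, so each may be summed over `q` first; the inner sums are the
values of the zeta generating functions `ψ_{y,b}(x_p)` and `ψ_{x,a}(y_p)`.
-/

open Finset

theorem sum_Icc_one_div_pow_mul_pow {K : Type*} [Field K] {u v : K} (hu : u ≠ 0) (hv : v ≠ 0)
    (huv : u ≠ v) (N : ℕ) :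
    ∑ k ∈ Icc 1 N, 1 / (u ^ k * v ^ (N + 1 - k)) =
      1 / (u ^ N * (v - u)) + 1 / (v ^ N * (u - v)) := by
  have hvu : v - u ≠ 0 := sub_ne_zero.2 huv.symm
  have huv' : u - v ≠ 0 := sub_ne_zero.2 huv
  induction N with
  | zero =>
    rw [Icc_eq_empty (by omega), sum_empty]
    field_simp
    ring
  | succ N ih =>
    have hshift : ∀ k ∈ Icc 1 N,
        1 / (u ^ k * v ^ (N + 1 + 1 - k)) = 1 / (u ^ k * v ^ (N + 1 - k)) / v := by
      intro k hk
      rw [(by grind : N + 1 + 1 - k = N + 1 - k + 1), pow_succ]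
      field_simp
    rw [sum_Icc_succ_top (by omega), sum_congr rfl hshift, ← sum_div, ih,
      Nat.add_sub_cancel_left]
    field_simp
    ring

theorem sum_Icc_div_pow_mul_div_pow {K : Type*} [Field K] {u v : K} (hu : u ≠ 0) (hv : v ≠ 0)
    (huv : u ≠ v) (c d : K) (N : ℕ) :
    ∑ k ∈ Icc 1 N, c / u ^ k * (d / v ^ (N + 1 - k)) =
      c * d / (u ^ N * (v - u)) + d * c / (v ^ N * (u - v)) := by
  calc ∑ k ∈ Icc 1 N, c / u ^ k * (d / v ^ (N + 1 - k))
      = c * d * ∑ k ∈ Icc 1 N, 1 / (u ^ k * v ^ (N + 1 - k)) := by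
        rw [mul_sum]
        exact sum_congr rfl fun k _ => by ring
    _ = c * d / (u ^ N * (v - u)) + d * c / (v ^ N * (u - v)) := by
        rw [sum_Icc_one_div_pow_mul_pow hu hv huv]
        ring

theorem mul_tsum_div_pow_succ {K ι : Type*} [Field K] [TopologicalSpace K] [IsTopologicalRing K]
    [T2Space K] {z : K} (hz : z ≠ 0) (c : K) (f w : ι → K) (N : ℕ) :
    c * (∑' i, f i * z / (w i - z)) / z ^ (N + 1) = ∑' i, c * f i / (z ^ N * (w i - z)) := by
  rw [mul_div_right_comm, ← tsum_mul_left]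
  refine tsum_congr fun i => ?_
  by_cases hw : w i - z = 0
  · simp [hw]
  · field_simp
    ring

theorem sum_tsum_mul_tsum {R ι α β : Type*} [NormedRing R] [CompleteSpace R] (s : Finset ι)
    {f : ι → α → R} {g : ι → β → R} (hf : ∀ i ∈ s, Summable fun a => ‖f i a‖)
    (hg : ∀ i ∈ s, Summable fun b => ‖g i b‖) :
    ∑ i ∈ s, (∑' a, f i a) * (∑' b, g i b) = ∑' t : α × β, ∑ i ∈ s, f i t.1 * g i t.2 := by
  rw [Summable.tsum_finsetSum fun i hi => ((hf i hi).mul_norm (hg i hi)).of_norm]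
  exact sum_congr rfl fun i hi => tsum_mul_tsum_of_summable_norm (hf i hi) (hg i hi)

theorem tsum_add_eq_tsum_tsum_add_tsum_swap {α E : Type*} [AddCommGroup E] [UniformSpace E]
    [IsUniformAddGroup E] [CompleteSpace E] [T2Space E] {F G : α × α → E} (hF : Summable F)
    (hG : Summable G) :
    ∑' t, (F t + G t) = ∑' p, (∑' q, F (p, q) + ∑' q, G (q, p)) := by
  have hG' : Summable fun t : α × α => G t.swap := hG.prod_symm
  rw [hF.tsum_add hG, ← (Equiv.prodComm α α).tsum_eq G]
  simp only [Equiv.prodComm_apply]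
  rw [hF.tsum_prod, hG'.tsum_prod, ← hF.prod.tsum_add hG'.prod]
  rfl

theorem statement14_general (a b x y : ℕ × ℕ → ℂ) (N : ℕ)
    (hx : ∀ p, x p ≠ 0) (hy : ∀ q, y q ≠ 0)
    (hxy : ∀ p q, x p ≠ y q)
    (ha : ∀ k, 1 ≤ k → k ≤ N → Summable (fun p : ℕ × ℕ => ‖a p / x p ^ k‖))
    (hb : ∀ k, 1 ≤ k → k ≤ N → Summable (fun q : ℕ × ℕ => ‖b q / y q ^ k‖))
    (hdx : Summable (fun t : (ℕ × ℕ) × (ℕ × ℕ) =>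
      ‖a t.1‖ * ‖b t.2‖ / (‖x t.1‖ ^ N * ‖x t.1 - y t.2‖)))
    (hdy : Summable (fun t : (ℕ × ℕ) × (ℕ × ℕ) =>
      ‖a t.1‖ * ‖b t.2‖ / (‖y t.2‖ ^ N * ‖x t.1 - y t.2‖))) :
    ∑ k ∈ Finset.Icc 1 N,
        (∑' p : ℕ × ℕ, a p / x p ^ k) * (∑' q : ℕ × ℕ, b q / y q ^ (N + 1 - k)) =
      ∑' p : ℕ × ℕ,
        (a p * (∑' q : ℕ × ℕ, b q * x p / (y q - x p)) / x p ^ (N + 1) +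
          b p * (∑' q : ℕ × ℕ, a q * y p / (x q - y p)) / y p ^ (N + 1)) := by
  have hF : Summable fun t : (ℕ × ℕ) × (ℕ × ℕ) =>
      a t.1 * b t.2 / (x t.1 ^ N * (y t.2 - x t.1)) :=
    .of_norm <| hdx.congr fun t => by simp only [norm_div, norm_mul, norm_pow, norm_sub_rev]
  have hG : Summable fun t : (ℕ × ℕ) × (ℕ × ℕ) =>
      b t.2 * a t.1 / (y t.2 ^ N * (x t.1 - y t.2)) :=
    .of_norm <| hdy.congr fun t => by simp only [norm_div, norm_mul, norm_pow, mul_comm]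
  rw [sum_tsum_mul_tsum (Icc 1 N) (fun k hk => ha k (mem_Icc.1 hk).1 (mem_Icc.1 hk).2)
    (fun k hk => hb (N + 1 - k) (by grind) (by grind))]
  simp_rw [sum_Icc_div_pow_mul_div_pow (hx _) (hy _) (hxy _ _), mul_tsum_div_pow_succ (hx _),
    mul_tsum_div_pow_succ (hy _)]
  exact tsum_add_eq_tsum_tsum_add_tsum_swap hF hG

/-- Two-fold convolution of doubly indexed Dirichlet series. -/
theorem statement14 (a b x y : ℕ × ℕ → ℂ) (N : ℕ) (hN : 1 ≤ N)
    (hx : ∀ p, x p ≠ 0) (hy : ∀ q, y q ≠ 0)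
    (hxy : ∀ p q, x p ≠ y q)
    (ha : ∀ k, 1 ≤ k → k ≤ N → Summable (fun p : ℕ × ℕ => ‖a p / x p ^ k‖))
    (hb : ∀ k, 1 ≤ k → k ≤ N → Summable (fun q : ℕ × ℕ => ‖b q / y q ^ k‖))
    (hdx : Summable (fun t : (ℕ × ℕ) × (ℕ × ℕ) =>
      ‖a t.1‖ * ‖b t.2‖ / (‖x t.1‖ ^ N * ‖x t.1 - y t.2‖)))
    (hdy : Summable (fun t : (ℕ × ℕ) × (ℕ × ℕ) =>
      ‖a t.1‖ * ‖b t.2‖ / (‖y t.2‖ ^ N * ‖x t.1 - y t.2‖))) :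
    ∑ k ∈ Finset.Icc 1 N,
        (∑' p : ℕ × ℕ, a p / x p ^ k) * (∑' q : ℕ × ℕ, b q / y q ^ (N + 1 - k)) =
      ∑' p : ℕ × ℕ,
        (a p * (∑' q : ℕ × ℕ, b q * x p / (y q - x p)) / x p ^ (N + 1) +
          b p * (∑' q : ℕ × ℕ, a q * y p / (x q - y p)) / y p ^ (N + 1)) :=
  statement14_general a b x y N hx hy hxy ha hb hdx hdy
end

section
/- Let α, β be positive real numbers and N a positive integer. Then Σ_{k=1}^{N} (−1)^k·α^(2k)·β^(2N+2−2k)·ζ(2k)²·ζ(2N+2−2k)² = −β^(2N+2)·Σ_{m=1}^∞ Σ_{n=1}^∞ (τ₀(n)·τ₀(m)/m^(2N))·α²/(β²n² + α²m²) − (−1)^(N+1)·α^(2N+2)·Σ_{m=1}^∞ Σ_{n=1}^∞ (τ₀(n)·τ₀(m)/n^(2N))·β²/(α²m² + β²n²). -/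
/-!
Since `ζ(s)² = ∑ τ(n) / n^s`, each term of the left side is the double series
`∑_{m,n} τ(m) τ(n) α^{2k} β^{2N+2-2k} / (m^{2N+2-2k} n^{2k})`. Summing over `k` first, the
`k`-sum is `τ(m) τ(n)` times the alternating sum `∑_{k=1}^N (-1)^k x^k y^{N+1-k}` with
`x = α²/n²`, `y = β²/m²`, whose closed form `((-1)^N x^{N+1} y - x y^{N+1}) / (x + y)` is exactly
the pair of kernels on the right. All terms are dominated by products of convergent Dirichlet
series of `τ`, which justifies the interchanges of summation.
-/

/-- The Riemann zeta function at integer arguments `s ≥ 2`,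
given by the series `∑_{m=1}^∞ 1/m^s`. -/
noncomputable def zetaR (s : ℕ) : ℝ := ∑' m : ℕ, 1 / ((m : ℝ) + 1) ^ s

/-- The number of positive divisors of `n`. -/
noncomputable def tau0 (n : ℕ) : ℝ := (n.divisors.card : ℝ)

open Finset

section DirichletSeries

open ArithmeticFunction LSeries
open scoped LSeries.notation ArithmeticFunction.zeta ArithmeticFunction.sigma

theorem LSeriesHasSum_ofReal_iff {g : ℕ → ℝ} {s : ℕ} {a : ℝ} :
    LSeriesHasSum (fun n => (g n : ℂ)) s a ↔
      HasSum (fun n : ℕ => g (n + 1) / ((n : ℝ) + 1) ^ s) a := by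
  rw [LSeriesHasSum, ← hasSum_nat_add_iff' 1, ← Complex.hasSum_ofReal]
  simp [term_of_ne_zero]

theorem zeta_convolution_zeta : (↗ζ ⍟ ↗ζ : ℕ → ℂ) = fun n => (tau0 n : ℂ) := by
  have hζ : (↗ζ : ℕ → ℂ) = ⇑(ζ : ArithmeticFunction ℂ) := funext fun _ => natCoe_apply.symm
  have hσ : ζ * ζ = σ 0 := by rw [← zeta_mul_pow_eq_sigma, pow_zero_eq_zeta]
  ext n
  rw [hζ, ArithmeticFunction.coe_mul, ← natCoe_mul, natCoe_apply, hσ, sigma_zero_apply, tau0]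
  push_cast
  rfl

theorem LSeriesHasSum_zeta_zetaR {s : ℕ} (hs : 2 ≤ s) : LSeriesHasSum ↗ζ s (zetaR s) := by
  have hsum : Summable fun n : ℕ => 1 / ((n : ℝ) + 1) ^ s := by
    exact_mod_cast (summable_nat_add_iff 1).2 (Real.summable_one_div_nat_pow.2 hs)
  have := LSeriesHasSum_ofReal_iff (g := fun n => (ζ n : ℝ)) (s := s) (a := zetaR s)
  push_cast at this
  rw [this]
  simpa [zetaR] using hsum.hasSum

end DirichletSeries

noncomputable def tau0Term (s n : ℕ) : ℝ := tau0 (n + 1) / ((n : ℝ) + 1) ^ s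

theorem tau0Term_nonneg (s n : ℕ) : 0 ≤ tau0Term s n := by
  unfold tau0Term tau0
  positivity

theorem hasSum_tau0Term {s : ℕ} (hs : 2 ≤ s) : HasSum (tau0Term s) (zetaR s ^ 2) := by
  have h := (LSeriesHasSum_zeta_zetaR hs).convolution (LSeriesHasSum_zeta_zetaR hs)
  rw [zeta_convolution_zeta, ← Complex.ofReal_mul, LSeriesHasSum_ofReal_iff, ← sq] at h
  exact h

theorem hasSum_tau0Term_mul_tau0Term {s t : ℕ} (hs : 2 ≤ s) (ht : 2 ≤ t) :
    HasSum (fun p : ℕ × ℕ => tau0Term s p.1 * tau0Term t p.2) (zetaR s ^ 2 * zetaR t ^ 2) :=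
  (hasSum_tau0Term hs).mul (hasSum_tau0Term ht) <|
    (hasSum_tau0Term hs).summable.mul_of_nonneg (hasSum_tau0Term ht).summable
      (tau0Term_nonneg s) (tau0Term_nonneg t)

theorem sum_Icc_neg_one_pow_mul_pow_mul_pow_mul_add {R : Type*} [CommRing R] (x y : R) (N : ℕ) :
    (∑ k ∈ Icc 1 N, (-1) ^ k * x ^ k * y ^ (N + 1 - k)) * (x + y) =
      (-1) ^ N * x ^ (N + 1) * y - x * y ^ (N + 1) := by
  induction N with
  | zero => simp
  | succ N ih =>
    have hshift : ∀ k ∈ Icc 1 N, (-1) ^ k * x ^ k * y ^ (N + 1 + 1 - k) =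
        (-1) ^ k * x ^ k * y ^ (N + 1 - k) * y := fun k hk => by
      rw [show N + 1 + 1 - k = N + 1 - k + 1 by grind, pow_succ]; ring
    rw [sum_Icc_succ_top (by omega), sum_congr rfl hshift, ← sum_mul, Nat.add_sub_cancel_left,
      pow_one]
    linear_combination y * ih

theorem sum_Icc_neg_one_pow_mul_pow_mul_pow {K : Type*} [Field K] {x y : K} (hxy : x + y ≠ 0)
    (N : ℕ) :
    ∑ k ∈ Icc 1 N, (-1) ^ k * x ^ k * y ^ (N + 1 - k) =
      ((-1) ^ N * x ^ (N + 1) * y - x * y ^ (N + 1)) / (x + y) := by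
  rw [eq_div_iff hxy, sum_Icc_neg_one_pow_mul_pow_mul_pow_mul_add]

theorem sum_Icc_neg_one_pow_mul_div_pow_mul_div_pow {K : Type*} [Field K] {A B P Q : K}
    (hP : P ≠ 0) (hQ : Q ≠ 0) (hAB : A * P + B * Q ≠ 0) (N : ℕ) :
    ∑ k ∈ Icc 1 N, (-1) ^ k * (A / Q) ^ k * (B / P) ^ (N + 1 - k) =
      (-1) ^ N * A ^ (N + 1) * B / Q ^ N / (A * P + B * Q) -
        A * B ^ (N + 1) / P ^ N / (A * P + B * Q) := by
  have hsum : A / Q + B / P ≠ 0 := by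
    rw [div_add_div _ _ hQ hP]
    exact div_ne_zero (by rwa [mul_comm Q B]) (mul_ne_zero hQ hP)
  rw [sum_Icc_neg_one_pow_mul_pow_mul_pow hsum, div_pow, div_pow]
  field_simp
  ring

-- The summands of the two double series on the right; `p = (m, n)` stands for `(m + 1, n + 1)`.
noncomputable def termM (α β : ℝ) (N : ℕ) (p : ℕ × ℕ) : ℝ :=
  (tau0 (p.2 + 1) * tau0 (p.1 + 1) / ((p.1 : ℝ) + 1) ^ (2 * N)) *
    (α ^ 2 / (β ^ 2 * ((p.2 : ℝ) + 1) ^ 2 + α ^ 2 * ((p.1 : ℝ) + 1) ^ 2))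

noncomputable def termN (α β : ℝ) (N : ℕ) (p : ℕ × ℕ) : ℝ :=
  (tau0 (p.2 + 1) * tau0 (p.1 + 1) / ((p.2 : ℝ) + 1) ^ (2 * N)) *
    (β ^ 2 / (α ^ 2 * ((p.1 : ℝ) + 1) ^ 2 + β ^ 2 * ((p.2 : ℝ) + 1) ^ 2))

theorem termN_eq_termM_swap (α β : ℝ) (N : ℕ) (p : ℕ × ℕ) :
    termN α β N p = termM β α N p.swap := by
  simp only [termN, termM, Prod.fst_swap, Prod.snd_swap]
  ring

theorem termM_nonneg (α β : ℝ) (N : ℕ) (p : ℕ × ℕ) : 0 ≤ termM α β N p := by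
  unfold termM tau0
  positivity

theorem termM_le (α : ℝ) {β : ℝ} (hβ : 0 < β) (N : ℕ) (p : ℕ × ℕ) :
    termM α β N p ≤ α ^ 2 / β ^ 2 * (tau0Term (2 * N) p.1 * tau0Term 2 p.2) := by
  obtain ⟨m, n⟩ := p
  calc termM α β N (m, n)
      ≤ tau0 (n + 1) * tau0 (m + 1) / ((m : ℝ) + 1) ^ (2 * N) *
          (α ^ 2 / (β ^ 2 * ((n : ℝ) + 1) ^ 2)) := by
        unfold termM
        gcongr
        · unfold tau0; positivity
        · exact le_add_of_nonneg_right (by positivity)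
    _ = α ^ 2 / β ^ 2 * (tau0Term (2 * N) m * tau0Term 2 n) := by
        unfold tau0Term
        field_simp

theorem summable_termM (α : ℝ) {β : ℝ} (hβ : 0 < β) {N : ℕ} (hN : 1 ≤ N) :
    Summable (termM α β N) :=
  .of_nonneg_of_le (termM_nonneg α β N) (termM_le α hβ N)
    ((hasSum_tau0Term_mul_tau0Term (by omega) le_rfl).summable.mul_left _)

theorem summable_termN {α : ℝ} (hα : 0 < α) (β : ℝ) {N : ℕ} (hN : 1 ≤ N) :
    Summable (termN α β N) := by
  rw [funext (termN_eq_termM_swap α β N)]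
  exact (summable_termM β hα hN).comp_injective Prod.swap_injective

theorem sum_Icc_tau0Term_mul_tau0Term_eq {α β : ℝ} (hα : 0 < α) (hβ : 0 < β) (N : ℕ) (p : ℕ × ℕ) :
    ∑ k ∈ Icc 1 N, (-1) ^ k * α ^ (2 * k) * β ^ (2 * N + 2 - 2 * k) *
        (tau0Term (2 * (N + 1 - k)) p.1 * tau0Term (2 * k) p.2) =
      -β ^ (2 * N + 2) * termM α β N p - (-1) ^ (N + 1) * α ^ (2 * N + 2) * termN α β N p := by
  obtain ⟨m, n⟩ := p
  have hsummand : ∀ k, (-1) ^ k * α ^ (2 * k) * β ^ (2 * N + 2 - 2 * k) *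
      (tau0Term (2 * (N + 1 - k)) m * tau0Term (2 * k) n) =
        tau0 (n + 1) * tau0 (m + 1) * ((-1) ^ k * (α ^ 2 / ((n : ℝ) + 1) ^ 2) ^ k *
          (β ^ 2 / ((m : ℝ) + 1) ^ 2) ^ (N + 1 - k)) := fun k => by
    rw [show 2 * N + 2 - 2 * k = 2 * (N + 1 - k) by omega]
    simp only [tau0Term, div_pow, pow_mul]
    ring
  rw [sum_congr rfl fun k _ => hsummand k, ← mul_sum, sum_Icc_neg_one_pow_mul_div_pow_mul_div_pow
    (by positivity) (by positivity) (by positivity)]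
  simp only [termM, termN, pow_mul]
  ring

/-- Convolution identity for squares of zeta values (squares of Bernoulli numbers). -/
theorem statement15 (α β : ℝ) (hα : 0 < α) (hβ : 0 < β) (N : ℕ) (hN : 1 ≤ N) :
    ∑ k ∈ Finset.Icc 1 N,
        (-1 : ℝ) ^ k * α ^ (2 * k) * β ^ (2 * N + 2 - 2 * k) *
          zetaR (2 * k) ^ 2 * zetaR (2 * (N + 1 - k)) ^ 2 =
      -β ^ (2 * N + 2) *
          (∑' m : ℕ, ∑' n : ℕ,
            (tau0 (n + 1) * tau0 (m + 1) / ((m : ℝ) + 1) ^ (2 * N)) *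
              (α ^ 2 / (β ^ 2 * ((n : ℝ) + 1) ^ 2 + α ^ 2 * ((m : ℝ) + 1) ^ 2))) -
        (-1 : ℝ) ^ (N + 1) * α ^ (2 * N + 2) *
          (∑' m : ℕ, ∑' n : ℕ,
            (tau0 (n + 1) * tau0 (m + 1) / ((n : ℝ) + 1) ^ (2 * N)) *
              (β ^ 2 / (α ^ 2 * ((m : ℝ) + 1) ^ 2 + β ^ 2 * ((n : ℝ) + 1) ^ 2))) := by
  have hprod : ∀ k ∈ Icc 1 N, HasSum
      (fun p : ℕ × ℕ => tau0Term (2 * (N + 1 - k)) p.1 * tau0Term (2 * k) p.2)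
      (zetaR (2 * (N + 1 - k)) ^ 2 * zetaR (2 * k) ^ 2) := fun k hk =>
    hasSum_tau0Term_mul_tau0Term (by grind) (by grind)
  have hsumM := summable_termM α hβ hN
  have hsumN := summable_termN hα β hN
  calc _ = ∑ k ∈ Icc 1 N, ∑' p : ℕ × ℕ, (-1) ^ k * α ^ (2 * k) * β ^ (2 * N + 2 - 2 * k) *
          (tau0Term (2 * (N + 1 - k)) p.1 * tau0Term (2 * k) p.2) :=
        sum_congr rfl fun k hk => by rw [tsum_mul_left, (hprod k hk).tsum_eq]; ring
    _ = ∑' p : ℕ × ℕ, ∑ k ∈ Icc 1 N, (-1) ^ k * α ^ (2 * k) * β ^ (2 * N + 2 - 2 * k) *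
          (tau0Term (2 * (N + 1 - k)) p.1 * tau0Term (2 * k) p.2) :=
        (Summable.tsum_finsetSum fun k hk => (hprod k hk).summable.mul_left _).symm
    _ = ∑' p : ℕ × ℕ, (-β ^ (2 * N + 2) * termM α β N p -
          (-1) ^ (N + 1) * α ^ (2 * N + 2) * termN α β N p) :=
        tsum_congr (sum_Icc_tau0Term_mul_tau0Term_eq hα hβ N)
    _ = _ := by
      rw [(hsumM.mul_left _).tsum_sub (hsumN.mul_left _), tsum_mul_left, tsum_mul_left,
        hsumM.tsum_prod, hsumN.tsum_prod]
      rfl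
end
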